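/- arXiv:2002.00715 — 4 statements merged into one kernel-verified Lean document; each statement's English description precedes it below -/
import Mathlib

section
/- Let $B$ be a simplicial set, $G$ a group, and $\tau$ a function from the positive-dimensional simplices of $B$ to $G$ satisfying: $\tau(b) = \tau(d_0 b)^{-1}\tau(d_1 b)$ for $b \in B_q$, $q > 1$; $\tau(d_i b) = \tau(b)$ for $i \geq 2$; $\tau(s_i b) = \tau(b)$ for $i \geq 1$; and $\tau(s_0 b) = e_G$. Let $R$ be a commutative ring, $A$ a commutative $R$-algebra on which $G$ acts by $R$-algebra isomorphisms. Define $\mathcal{L}^R_B(A^\tau)_n = \bigotimes_{b \in B_n} A$ (tensor over $R$) with face map $d_0$ twisted by $\tau$ (i.e., $d_0$ sends $\bigotimes_b f_b$ to $\bigotimes_c \prod_{b: d_0 b = c} \tau(b)(f_b)$), untwisted faces $d_i$ for $i \geq 1$ given by multiplication along $d_i$ of $B$, and degeneracies given by insertion of units. Then these structure maps satisfy the simplicial identities, so $\mathcal{L}^R_B(A^\tau)$ is a simplicial commutative $R$-algebra. -/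
/-!
Every structure map of the twisted Loday construction is a twisted pushforward: it multiplies
the factors of a pure tensor along the fibres of a map of finite sets after acting on each factor
by a group element. Such pushforwards compose by composing the maps and multiplying the twists.
Each simplicial identity of `𝓛^R_B(A^τ)` is therefore the corresponding simplicial identity of `B`
together with an identity between twists, and the latter are exactly the cocycle conditions on `τ`.
-/

open CategoryTheory Simplicial Finset

namespace TwistedLoday

section Pushforward

variable {M A X Y Z : Type*} [Monoid M] [CommMonoid A] [MulDistribMulAction M A]

def twistedPush [Fintype X] [DecidableEq Y] (φ : X → Y) (t : X → M) (f : X → A) : Y → A :=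
  fun y => ∏ x ∈ univ.filter (φ · = y), t x • f x

theorem twistedPush_twistedPush [Fintype X] [Fintype Y] [DecidableEq Y] [DecidableEq Z]
    (ψ : Y → Z) (s : Y → M) (φ : X → Y) (t : X → M) (f : X → A) :
    twistedPush ψ s (twistedPush φ t f) =
      twistedPush (ψ ∘ φ) (fun x => s (φ x) * t x) f := by
  funext z
  have smul_fibre (y : Y) : s y • twistedPush φ t f y =
      ∏ x ∈ univ.filter (φ · = y), (s (φ x) * t x) • f x := by
    rw [twistedPush, smul_prod']
    refine prod_congr rfl fun x hx => ?_
    rw [(mem_filter.1 hx).2, mul_smul]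
  simp only [Function.comp_apply, twistedPush] at smul_fibre ⊢
  simp only [smul_fibre, prod_fiberwise_eq_prod_filter, mem_filter, mem_univ, true_and]

theorem twistedPush_id [Fintype X] [DecidableEq X] (f : X → A) :
    twistedPush id (1 : X → M) f = f := by
  funext x
  simp [twistedPush, filter_eq']

end Pushforward

section Twist

variable {G : Type*} [Group G] (B : SSet) (τ : ∀ q : ℕ, B _⦋q + 1⦌ → G)

def faceTwist (n : ℕ) (i : Fin (n + 2)) (b : B _⦋n + 1⦌) : G :=
  if i = 0 then τ n b else 1

variable {B τ}

theorem twist_σ_zero_eq_one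
    (h₁ : ∀ (q : ℕ) (b : B _⦋q + 2⦌), τ (q + 1) b = (τ q (B.δ 0 b))⁻¹ * τ q (B.δ 1 b))
    (h₃ : ∀ (q : ℕ) (b : B _⦋q + 1⦌) (i : Fin (q + 2)), 1 ≤ (i : ℕ) →
      τ (q + 1) (B.σ i b) = τ q b)
    (h₄ : ∀ (q : ℕ) (b : B _⦋q + 1⦌), τ (q + 1) (B.σ 0 b) = 1) (n : ℕ) (c : B _⦋n⦌) :
    τ n (B.σ 0 c) = 1 := by
  cases n with
  | succ n => exact h₄ n c
  | zero =>
    -- `h₄` says nothing in dimension 0: apply `h₁` to `σ₁σ₀c`, whose faces `d₀`, `d₁` are both `σ₀c`.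
    have h₀ : B.δ 0 (B.σ 1 (B.σ 0 c)) = B.σ 0 c :=
      (SSet.δ_comp_σ_of_le_apply (i := 0) (j := 0) le_rfl _).trans
        (congrArg (B.σ 0) (SSet.δ_comp_σ_self_apply 0 c))
    have h₁' := h₁ 0 (B.σ 1 (B.σ 0 c))
    rw [h₃ 0 _ 1 le_rfl, h₀, SSet.δ_comp_σ_self'_apply (j := 1) (i := 1) rfl] at h₁'
    simpa using h₁'

theorem faceTwist_succ (n : ℕ) (i : Fin (n + 1)) (b : B _⦋n + 1⦌) :
    faceTwist B τ n i.succ b = 1 :=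
  if_neg (Fin.succ_ne_zero i)

theorem faceTwist_δ_mul_faceTwist
    (h₁ : ∀ (q : ℕ) (b : B _⦋q + 2⦌), τ (q + 1) b = (τ q (B.δ 0 b))⁻¹ * τ q (B.δ 1 b))
    (h₂ : ∀ (q : ℕ) (b : B _⦋q + 2⦌) (i : Fin (q + 3)), 2 ≤ (i : ℕ) →
      τ q (B.δ i b) = τ (q + 1) b)
    {n : ℕ} {i j : Fin (n + 2)} (hij : i ≤ j) (b : B _⦋n + 2⦌) :
    faceTwist B τ n i (B.δ j.succ b) * faceTwist B τ (n + 1) j.succ b =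
      faceTwist B τ n j (B.δ i.castSucc b) * faceTwist B τ (n + 1) i.castSucc b := by
  rw [faceTwist_succ, mul_one]
  rcases eq_or_ne i 0 with rfl | hi
  · rcases eq_or_ne j 0 with rfl | hj
    · simp [faceTwist, h₁]
    · simp [faceTwist, hj, h₂ n b j.succ (by simp [Fin.val_succ, Nat.one_le_iff_ne_zero, hj])]
  · have hj : j ≠ 0 := fun hj => hi (nonpos_iff_eq_zero.mp (hj ▸ hij))
    simp [faceTwist, hi, hj]

theorem faceTwist_castSucc_σ_succ
    (h₃ : ∀ (q : ℕ) (b : B _⦋q + 1⦌) (i : Fin (q + 2)), 1 ≤ (i : ℕ) →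
      τ (q + 1) (B.σ i b) = τ q b)
    {n : ℕ} (i : Fin (n + 2)) (j : Fin (n + 1)) (b : B _⦋n + 1⦌) :
    faceTwist B τ (n + 1) i.castSucc (B.σ j.succ b) = faceTwist B τ n i b := by
  simp [faceTwist, h₃ n b j.succ (by simp [Fin.val_succ])]

theorem faceTwist_castSucc_σ_self (hσ : ∀ (n : ℕ) (c : B _⦋n⦌), τ n (B.σ 0 c) = 1)
    (n : ℕ) (i : Fin (n + 1)) (b : B _⦋n⦌) :
    faceTwist B τ n i.castSucc (B.σ i b) = 1 := by
  rcases eq_or_ne i 0 with rfl | hi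
  · simp [faceTwist, hσ]
  · simp [faceTwist, hi]

end Twist

section Loday

variable {G A : Type*} [Group G] [CommMonoid A] (act : G →* MulAut A)
  (B : SSet) [∀ n : ℕ, Fintype (B _⦋n⦌)] [∀ n : ℕ, DecidableEq (B _⦋n⦌)]
  (τ : ∀ q : ℕ, B _⦋q + 1⦌ → G)

def face (n : ℕ) (i : Fin (n + 2)) : (B _⦋n + 1⦌ → A) → B _⦋n⦌ → A :=
  twistedPush (B.δ i) fun b => act (faceTwist B τ n i b)

def degeneracy (n : ℕ) (i : Fin (n + 1)) : (B _⦋n⦌ → A) → B _⦋n + 1⦌ → A :=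
  twistedPush (B.σ i) (1 : B _⦋n⦌ → MulAut A)

variable {act B τ}

theorem face_comp_face_apply
    (h₁ : ∀ (q : ℕ) (b : B _⦋q + 2⦌), τ (q + 1) b = (τ q (B.δ 0 b))⁻¹ * τ q (B.δ 1 b))
    (h₂ : ∀ (q : ℕ) (b : B _⦋q + 2⦌) (i : Fin (q + 3)), 2 ≤ (i : ℕ) →
      τ q (B.δ i b) = τ (q + 1) b)
    {n : ℕ} {i j : Fin (n + 2)} (hij : i ≤ j) (f : B _⦋n + 2⦌ → A) :
    face act B τ n i (face act B τ (n + 1) j.succ f) =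
      face act B τ n j (face act B τ (n + 1) i.castSucc f) := by
  simp only [face, twistedPush_twistedPush, ← map_mul]
  congr 1
  · exact funext (SSet.δ_comp_δ_apply hij)
  · exact funext fun b => congrArg act (faceTwist_δ_mul_faceTwist h₁ h₂ hij b)

theorem degeneracy_comp_degeneracy_apply {n : ℕ} {i j : Fin (n + 1)} (hij : i ≤ j)
    (f : B _⦋n⦌ → A) :
    degeneracy B (n + 1) i.castSucc (degeneracy B n j f) =
      degeneracy B (n + 1) j.succ (degeneracy B n i f) := by
  simp only [degeneracy, twistedPush_twistedPush]
  congr 1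
  exact funext (SSet.σ_comp_σ_apply hij)

theorem face_comp_degeneracy_of_le_apply
    (h₃ : ∀ (q : ℕ) (b : B _⦋q + 1⦌) (i : Fin (q + 2)), 1 ≤ (i : ℕ) →
      τ (q + 1) (B.σ i b) = τ q b)
    {n : ℕ} {i : Fin (n + 2)} {j : Fin (n + 1)} (hij : i ≤ j.castSucc) (f : B _⦋n + 1⦌ → A) :
    face act B τ (n + 1) i.castSucc (degeneracy B (n + 1) j.succ f) =
      degeneracy B n j (face act B τ n i f) := by
  simp only [face, degeneracy, twistedPush_twistedPush]
  congr 1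
  · exact funext (SSet.δ_comp_σ_of_le_apply hij)
  · funext b
    simp [faceTwist_castSucc_σ_succ h₃]

theorem face_comp_degeneracy_self_apply (hσ : ∀ (n : ℕ) (c : B _⦋n⦌), τ n (B.σ 0 c) = 1)
    {n : ℕ} (i : Fin (n + 1)) (f : B _⦋n⦌ → A) :
    face act B τ n i.castSucc (degeneracy B n i f) = f := by
  simp only [face, degeneracy, twistedPush_twistedPush]
  convert twistedPush_id (M := MulAut A) f
  · exact funext (SSet.δ_comp_σ_self_apply i)
  · simp [faceTwist_castSucc_σ_self hσ]

theorem face_comp_degeneracy_succ_apply {n : ℕ} (i : Fin (n + 1)) (f : B _⦋n⦌ → A) :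
    face act B τ n i.succ (degeneracy B n i f) = f := by
  simp only [face, degeneracy, twistedPush_twistedPush]
  convert twistedPush_id (M := MulAut A) f
  · exact funext (SSet.δ_comp_σ_succ_apply i)
  · simp [faceTwist_succ]

theorem face_comp_degeneracy_of_gt_apply {n : ℕ} {i : Fin (n + 2)} {j : Fin (n + 1)}
    (hij : j.castSucc < i) (f : B _⦋n + 1⦌ → A) :
    face act B τ (n + 1) i.succ (degeneracy B (n + 1) j.castSucc f) =
      degeneracy B n j (face act B τ n i f) := by
  have hi : i ≠ 0 := Fin.ne_zero_of_lt hij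
  simp only [face, degeneracy, twistedPush_twistedPush]
  congr 1
  · exact funext (SSet.δ_comp_σ_of_gt_apply hij)
  · funext b
    simp [faceTwist, hi]

end Loday

end TwistedLoday

theorem twisted_loday_is_simplicial
    (R A : Type) [CommRing R] [CommRing A] [Algebra R A]
    (G : Type) [Group G] (act : G →* (A ≃ₐ[R] A))
    (B : SSet) [∀ n : ℕ, Fintype (B _⦋n⦌)] [∀ n : ℕ, DecidableEq (B _⦋n⦌)]
    (τ : ∀ q : ℕ, B _⦋q + 1⦌ → G)
    (hτ₁ : ∀ (q : ℕ) (b : B _⦋q + 2⦌),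
      τ (q + 1) b = (τ q (B.δ 0 b))⁻¹ * τ q (B.δ 1 b))
    (hτ₂ : ∀ (q : ℕ) (b : B _⦋q + 2⦌) (i : Fin (q + 3)), 2 ≤ (i : ℕ) →
      τ q (B.δ i b) = τ (q + 1) b)
    (hτ₃ : ∀ (q : ℕ) (b : B _⦋q + 1⦌) (i : Fin (q + 2)), 1 ≤ (i : ℕ) →
      τ (q + 1) (B.σ i b) = τ q b)
    (hτ₄ : ∀ (q : ℕ) (b : B _⦋q + 1⦌), τ (q + 1) (B.σ 0 b) = 1)
    -- the (possibly twisted) face maps of `𝓛^R_B(A^τ)` on pure tensors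
    (D : ∀ n : ℕ, Fin (n + 2) → (B _⦋n + 1⦌ → A) → (B _⦋n⦌ → A))
    (hD : ∀ n i f c, D n i f c =
      ∏ b ∈ univ.filter (fun b => B.δ i b = c),
        (if (i : ℕ) = 0 then act (τ n b) (f b) else f b))
    -- the degeneracy maps of `𝓛^R_B(A^τ)` on pure tensors
    (S : ∀ n : ℕ, Fin (n + 1) → (B _⦋n⦌ → A) → (B _⦋n + 1⦌ → A))
    (hS : ∀ n i f d, S n i f d = ∏ b ∈ univ.filter (fun b => B.σ i b = d), f b) :
    -- simplicial identities
    (∀ (n : ℕ) (i j : Fin (n + 2)), i ≤ j → ∀ f : B _⦋n + 2⦌ → A,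
      D n i (D (n + 1) j.succ f) = D n j (D (n + 1) i.castSucc f)) ∧
    (∀ (n : ℕ) (i j : Fin (n + 1)), i ≤ j → ∀ f : B _⦋n⦌ → A,
      S (n + 1) i.castSucc (S n j f) = S (n + 1) j.succ (S n i f)) ∧
    (∀ (n : ℕ) (i : Fin (n + 2)) (j : Fin (n + 1)), i ≤ j.castSucc →
      ∀ f : B _⦋n + 1⦌ → A,
      D (n + 1) i.castSucc (S (n + 1) j.succ f) = S n j (D n i f)) ∧
    (∀ (n : ℕ) (i : Fin (n + 1)) (f : B _⦋n⦌ → A),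
      D n i.castSucc (S n i f) = f ∧ D n i.succ (S n i f) = f) ∧
    (∀ (n : ℕ) (i : Fin (n + 2)) (j : Fin (n + 1)), j.castSucc < i →
      ∀ f : B _⦋n + 1⦌ → A,
      D (n + 1) i.succ (S (n + 1) j.castSucc f) = S n j (D n i f)) := by
  let act' : G →* MulAut A := (MulDistribMulAction.toMulAut (A ≃ₐ[R] A) A).comp act
  have hD' : D = TwistedLoday.face act' B τ := by
    funext n i f c
    rw [hD]
    refine prod_congr rfl fun b _ => ?_
    by_cases hi : i = 0 <;> simp [TwistedLoday.faceTwist, hi, act']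
  have hS' : S = TwistedLoday.degeneracy B := by
    funext n i f d
    simp [hS, TwistedLoday.degeneracy, TwistedLoday.twistedPush]
  subst hD' hS'
  have hσ := TwistedLoday.twist_σ_zero_eq_one hτ₁ hτ₃ hτ₄
  exact ⟨fun _ _ _ hij => TwistedLoday.face_comp_face_apply hτ₁ hτ₂ hij,
    fun _ _ _ hij => TwistedLoday.degeneracy_comp_degeneracy_apply hij,
    fun _ _ _ hij => TwistedLoday.face_comp_degeneracy_of_le_apply hτ₃ hij,
    fun _ i f => ⟨TwistedLoday.face_comp_degeneracy_self_apply hσ i f,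
      TwistedLoday.face_comp_degeneracy_succ_apply i f⟩,
    fun _ _ _ hij => TwistedLoday.face_comp_degeneracy_of_gt_apply hij⟩
end

section
/- Let $R \to A$ be a map of commutative rings and let $E(\tau) = F \times_\tau B$ be a twisted cartesian product of simplicial sets with simplicial structure group $G$ acting on $F$ from the left. Endow $\mathcal{L}^R_F(A)$ (whose $n$-simplices are $\bigotimes_{f \in F_n} A$) with the left $G$-action given by $(g, \bigotimes_f a_f) \mapsto \bigotimes_f a_{g^{-1}f}$. Then there is an isomorphism of simplicial commutative $R$-algebras $\mathcal{L}^R_{E(\tau)}(A) \cong \mathcal{L}^R_B(\mathcal{L}^R_F(A)^\tau)$, where the right-hand side is the twisted Loday construction of the simplicial $R$-algebra $\mathcal{L}^R_F(A)$ over $B$ twisted by $\tau$. -/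
/-!
Both sides are monomials indexed by `Fₙ × Bₙ`, and every face or degeneracy of `E(τ)` has the
form `(f, b) ↦ (ψ_b f, φ b)`.  The product over a fibre of such a map splits as a product over
the fibre of `φ` of products over fibres of the `ψ_b`, which is exactly how the twisted Loday
construction acts on curried monomials.  For `d₀` the map is `ψ_b = τ(b) · d₀`, and its fibre
over `f` is the fibre of `d₀` over `τ(b)⁻¹ f`, which is where the action `g • c = c ∘ (g⁻¹ ·)`
comes from.
-/

open CategoryTheory Simplicial Finset

theorem Finset.prod_filter_prodMk_eq_prod_prod {α β γ δ M : Type*} [Fintype α] [Fintype β]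
    [DecidableEq γ] [DecidableEq δ] [CommMonoid M] (ψ : β → α → γ) (φ : β → δ)
    (x : α × β → M) (c : γ) (d : δ) :
    ∏ p ∈ univ.filter (fun p : α × β => (ψ p.2 p.1, φ p.2) = (c, d)), x p =
      ∏ b ∈ univ.filter (fun b => φ b = d), ∏ a ∈ univ.filter (fun a => ψ b a = c), x (a, b) := by
  rw [← univ_product_univ, prod_filter, prod_product_right, prod_filter]
  refine prod_congr rfl fun b _ => ?_
  by_cases hb : φ b = d <;> simp [hb, prod_filter]

theorem act_eq_iff_eq_inv_act {G X : Type*} [Group G] (α : G → X → X)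
    (hone : ∀ x, α 1 x = x) (hmul : ∀ g h x, α (g * h) x = α g (α h x)) (g : G) {x y : X} :
    α g x = y ↔ x = α g⁻¹ y :=
  letI : MulAction G X := { smul := α, one_smul := hone, mul_smul := hmul }
  smul_eq_iff_eq_inv_smul g

theorem loday_of_tcp_iso_twisted_loday
    (R A : Type) [CommRing R] [CommRing A] [Algebra R A]
    (F B G : SSet) [∀ n : ℕ, Group (G _⦋n⦌)]
    [∀ n : ℕ, Fintype (F _⦋n⦌)] [∀ n : ℕ, DecidableEq (F _⦋n⦌)]
    [∀ n : ℕ, Fintype (B _⦋n⦌)] [∀ n : ℕ, DecidableEq (B _⦋n⦌)]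
    -- `G` is a simplicial group acting simplicially on `F` from the left
    (hGδ : ∀ (n : ℕ) (i : Fin (n + 2)) (x y : G _⦋n + 1⦌),
      G.δ i (x * y) = G.δ i x * G.δ i y)
    (hGσ : ∀ (n : ℕ) (i : Fin (n + 1)) (x y : G _⦋n⦌),
      G.σ i (x * y) = G.σ i x * G.σ i y)
    (α : ∀ n : ℕ, G _⦋n⦌ → F _⦋n⦌ → F _⦋n⦌)
    (hone : ∀ n f, α n 1 f = f)
    (hmul : ∀ n g h f, α n (g * h) f = α n g (α n h f))
    (hαδ : ∀ (n : ℕ) (i : Fin (n + 2)) (g : G _⦋n + 1⦌) (f : F _⦋n + 1⦌),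
      F.δ i (α (n + 1) g f) = α n (G.δ i g) (F.δ i f))
    (hασ : ∀ (n : ℕ) (i : Fin (n + 1)) (g : G _⦋n⦌) (f : F _⦋n⦌),
      F.σ i (α n g f) = α (n + 1) (G.σ i g) (F.σ i f))
    -- Moore's conditions on the twisting function τ
    (τ : ∀ q : ℕ, B _⦋q + 1⦌ → G _⦋q⦌)
    (hτ₁ : ∀ (q : ℕ) (b : B _⦋q + 2⦌),
      G.δ 0 (τ (q + 1) b) = (τ q (B.δ 0 b))⁻¹ * τ q (B.δ 1 b))
    (hτ₂ : ∀ (q : ℕ) (b : B _⦋q + 2⦌) (i : Fin (q + 2)), 1 ≤ (i : ℕ) →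
      τ q (B.δ i.succ b) = G.δ i (τ (q + 1) b))
    (hτ₃ : ∀ (q : ℕ) (b : B _⦋q + 1⦌) (i : Fin (q + 1)),
      τ (q + 1) (B.σ i.succ b) = G.σ i (τ q b))
    (hτ₄ : ∀ (q : ℕ) (b : B _⦋q + 1⦌), τ (q + 1) (B.σ 0 b) = 1)
    -- structure maps of the TCP `E(τ) = F ×_τ B`
    (DE : ∀ n : ℕ, Fin (n + 2) → F _⦋n + 1⦌ × B _⦋n + 1⦌ → F _⦋n⦌ × B _⦋n⦌)
    (hDE : ∀ n i p, DE n i p =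
      if (i : ℕ) = 0 then (α n (τ n p.2) (F.δ 0 p.1), B.δ 0 p.2)
      else (F.δ i p.1, B.δ i p.2))
    (SE : ∀ n : ℕ, Fin (n + 1) → F _⦋n⦌ × B _⦋n⦌ → F _⦋n + 1⦌ × B _⦋n + 1⦌)
    (hSE : ∀ n i p, SE n i p = (F.σ i p.1, B.σ i p.2))
    -- structure maps of `𝓛^R_{E(τ)}(A)` on pure tensors
    (LD : ∀ n : ℕ, Fin (n + 2) → (F _⦋n + 1⦌ × B _⦋n + 1⦌ → A) → (F _⦋n⦌ × B _⦋n⦌ → A))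
    (hLD : ∀ n i x e, LD n i x e = ∏ e' ∈ univ.filter (fun e' => DE n i e' = e), x e')
    (LS : ∀ n : ℕ, Fin (n + 1) → (F _⦋n⦌ × B _⦋n⦌ → A) → (F _⦋n + 1⦌ × B _⦋n + 1⦌ → A))
    (hLS : ∀ n i x e, LS n i x e = ∏ e' ∈ univ.filter (fun e' => SE n i e' = e), x e')
    -- internal structure maps of the simplicial algebra `C = 𝓛^R_F(A)` on pure tensors
    (cd : ∀ n : ℕ, Fin (n + 2) → (F _⦋n + 1⦌ → A) → (F _⦋n⦌ → A))
    (hcd : ∀ n i c g, cd n i c g = ∏ f ∈ univ.filter (fun f => F.δ i f = g), c f)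
    (cs : ∀ n : ℕ, Fin (n + 1) → (F _⦋n⦌ → A) → (F _⦋n + 1⦌ → A))
    (hcs : ∀ n i c g, cs n i c g = ∏ f ∈ univ.filter (fun f => F.σ i f = g), c f)
    -- structure maps of the twisted Loday construction `𝓛^R_B(𝓛^R_F(A)^τ)`,
    -- where `g ∈ Gₙ` acts on `c ∈ 𝓛^R_F(A)ₙ` by `(g • c) f = c (g⁻¹ • f)`
    (RD : ∀ n : ℕ, Fin (n + 2) → (B _⦋n + 1⦌ → F _⦋n + 1⦌ → A) → (B _⦋n⦌ → F _⦋n⦌ → A))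
    (hRD : ∀ n i x c, RD n i x c =
      ∏ b ∈ univ.filter (fun b => B.δ i b = c),
        (if (i : ℕ) = 0 then fun g => cd n 0 (x b) (α n (τ n b)⁻¹ g)
         else cd n i (x b)))
    (RS : ∀ n : ℕ, Fin (n + 1) → (B _⦋n⦌ → F _⦋n⦌ → A) → (B _⦋n + 1⦌ → F _⦋n + 1⦌ → A))
    (hRS : ∀ n i x d, RS n i x d =
      ∏ b ∈ univ.filter (fun b => B.σ i b = d), cs n i (x b))
    -- the canonical identification (currying)
    (cur : ∀ n : ℕ, (F _⦋n⦌ × B _⦋n⦌ → A) → (B _⦋n⦌ → F _⦋n⦌ → A))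
    (hcur : ∀ n x b f, cur n x b f = x (f, b)) :
    -- currying is an isomorphism of simplicial objects:
    (∀ (n : ℕ) (i : Fin (n + 2)) (x : F _⦋n + 1⦌ × B _⦋n + 1⦌ → A),
      cur n (LD n i x) = RD n i (cur (n + 1) x)) ∧
    (∀ (n : ℕ) (i : Fin (n + 1)) (x : F _⦋n⦌ × B _⦋n⦌ → A),
      cur (n + 1) (LS n i x) = RS n i (cur n x)) := by
  refine ⟨fun n i x => funext₂ fun b f => ?_, fun n i x => funext₂ fun b f => ?_⟩
  · rw [hcur, hLD, hRD, prod_apply]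
    by_cases hi : (i : ℕ) = 0
    · obtain rfl : i = 0 := Fin.ext hi
      rw [filter_congr fun p _ => by rw [hDE, if_pos hi],
        prod_filter_prodMk_eq_prod_prod (fun b' a => α n (τ n b') (F.δ 0 a)) (B.δ 0)]
      refine prod_congr rfl fun b' _ => ?_
      simp only [if_pos hi, hcd, hcur, act_eq_iff_eq_inv_act (α n) (hone n) (hmul n)]
    · rw [filter_congr fun p _ => by rw [hDE, if_neg hi],
        prod_filter_prodMk_eq_prod_prod (fun _ => F.δ i) (B.δ i)]
      simp only [if_neg hi, hcd, hcur]
  · rw [hcur, hLS, hRS, prod_apply,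
      filter_congr fun p _ => by rw [hSE],
      prod_filter_prodMk_eq_prod_prod (fun _ => F.σ i) (B.σ i)]
    simp only [hcs, hcur]
end

section
/- The map $S^1 \to S^1$ of simplicial circles induced by the degree-2 cover sends the class $\varepsilon x \in \operatorname{HH}_1^k(k[x])$ of the total space to $2\varepsilon x$ in $\operatorname{HH}_1^k(k[x])$ of the base. Concretely, in the simplicial model of $S^1$ with two vertices $v_0, v_1$ and two non-degenerate edges $\alpha_0, \alpha_1$, the Hochschild $1$-cycle $x_{\alpha_0} + x_{\alpha_1}$ (placing $x$ over one edge and $1$ elsewhere, summed over the two edges) maps under the double cover to $2 \cdot (1 \otimes x)$, which represents $2\varepsilon x$ in the standard Hochschild complex of $k[x]$. -/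
/-!
STATEMENT 8: In the simplicial model of `S¹` with two vertices `v₀, v₁` and two
non-degenerate edges `α₀, α₁`, the degree-1 Loday chains of `A = k[x]` form
`A^{⊗4} = (A_{s₀v₀} ⊗ A_{s₀v₁}) ⊗ (A_{α₀} ⊗ A_{α₁})`.  The double cover map to the
standard simplicial circle (both edges mapping to the single non-degenerate edge `α`)
multiplies the two vertex factors (over `s₀v`) and the two edge factors (over `α`),
landing in `A_{s₀v} ⊗ A_α`.  The Hochschild 1-cycle `x_{α₀} + x_{α₁}` maps under the
double cover to `2·(1 ⊗ x)`, which represents `2 ε x` in the standard Hochschild complex;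
moreover it is a cycle: its image under `d₀ - d₁` is zero, where the face maps
`d₀, d₁ : A^{⊗4} → A_{v₀} ⊗ A_{v₁}` of the two-edge circle are determined by
`d₀α₀ = v₁, d₁α₀ = v₀, d₀α₁ = v₀, d₁α₁ = v₁` (and `s₀vᵢ ↦ vᵢ`), i.e.
`d₀((a⊗b)⊗(c⊗d)) = (a d)⊗(b c)` and `d₁((a⊗b)⊗(c⊗d)) = (a c)⊗(b d)`.
-/

open TensorProduct Polynomial

theorem double_cover_sends_eps_x_to_two_eps_x (k : Type) [CommRing k] :
    ∀ (cover d0 d1 :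
        ((Polynomial k ⊗[k] Polynomial k) ⊗[k] (Polynomial k ⊗[k] Polynomial k))
          →ₗ[k] (Polynomial k ⊗[k] Polynomial k)),
      -- the double cover multiplies the vertex factors and the edge factors
      cover = TensorProduct.map (LinearMap.mul' k (Polynomial k))
          (LinearMap.mul' k (Polynomial k)) →
      -- `d₀` twists the edge factors past each other before multiplying
      d0 = (LinearMap.mul' k (Polynomial k ⊗[k] Polynomial k)) ∘ₗ
          (LinearMap.lTensor (Polynomial k ⊗[k] Polynomial k)
            (TensorProduct.comm k (Polynomial k) (Polynomial k)).toLinearMap) →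
      d1 = LinearMap.mul' k (Polynomial k ⊗[k] Polynomial k) →
      ∀ z : (Polynomial k ⊗[k] Polynomial k) ⊗[k] (Polynomial k ⊗[k] Polynomial k),
        -- `z = x_{α₀} + x_{α₁}`
        z = (1 ⊗ₜ[k] 1) ⊗ₜ[k] ((X : Polynomial k) ⊗ₜ[k] 1)
          + (1 ⊗ₜ[k] 1) ⊗ₜ[k] ((1 : Polynomial k) ⊗ₜ[k] (X : Polynomial k)) →
        cover z = 2 • ((1 : Polynomial k) ⊗ₜ[k] (X : Polynomial k)) ∧
        d0 z - d1 z = 0 := by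
  rintro cover d0 d1 rfl rfl rfl z rfl
  constructor
  · simp [TensorProduct.map_tmul, LinearMap.mul'_apply, two_smul,
      Algebra.TensorProduct.tmul_mul_tmul]
  · simp [LinearMap.mul'_apply, Algebra.TensorProduct.tmul_mul_tmul, add_comm]
end

section
/- In the $n$-fold multisimplicial Loday complex $\mathcal{L}^{\mathbb{Q}}_{T^n}(\mathbb{Q}[t];\mathbb{Q})$, let $\mathbf{a}, \mathbf{b}$ be coordinates in multidegree $\mathbf{1}_{n-1}$ and $x, y \in \mathbb{Q}[t]$. Then the cycles $x_{(\mathbf{a},1)}\cdot y_{(\mathbf{b},1)}$ and $x_{(\mathbf{a},0)}\cdot y_{(\mathbf{b},1)} + x_{(\mathbf{a},1)}\cdot y_{(\mathbf{b},0)}$ in multidegree $\mathbf{1}_n$ are homologous: their difference is the total differential of $x_{(\mathbf{a},1)}\cdot y_{(\mathbf{b},2)}$ in multidegree $(\mathbf{1}_{n-1},2)$ (Split Moving Lemma). -/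
/-!
The multisimplicial Loday complex `𝓛^ℚ_{Tⁿ}(ℚ[t]; ℚ)` of the `n`-torus with reduced
coefficients, in the multidegrees needed for the moving lemmas.

A chain in multidegree `𝟏ₙ + eᵢ`-or-lower is a `ℚ`-linear combination of monomial
multi-matrices with entries powers of `t` (entry `ℚ` at the basepoint coordinate `𝟎ₙ`);
such a monomial is recorded by its exponent multi-matrix, a finitely supported function
`e : (Fin n → ℕ) → ℕ` (the exponent of `t` at each coordinate) with `e 𝟎 = 0`.  Chains
form the monoid algebra `Ch n` of these exponent matrices (multiplication of monomials
adds exponents coordinatewise, matching multiplication of multi-matrices).  `elem v x` is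
the multi-matrix `x_𝐯` with `x ∈ ℚ[t]` at coordinate `𝐯` and `1` elsewhere (so
`elem 𝟎 t = 0`: `t` acts as `0` on the coefficient copy of `ℚ`).  `D i j` is the `j`-th
face map of the simplicial circle in the `i`-th direction (for circle-degree `2 → 1`),
`del i = D i 0 - D i 1 + D i 2` the corresponding differential, `Deg b` the chains of
multidegree (entrywise) at most `b`, and `Homologous x y` says the difference `x - y` is
a boundary coming from total multidegree `n + 1`, i.e. from the multidegrees `𝟏ₙ + eᵢ`
(in the directions `i'` with multidegree `1` the cyclic differentials vanish).
-/

/-- Coordinates of a multi-matrix. -/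
abbrev Coord (n : ℕ) := Fin n → ℕ

/-- Exponent multi-matrices: the exponent at the basepoint coordinate `𝟎` is `0`. -/
noncomputable def ExpM (n : ℕ) : AddSubmonoid ((Coord n) →₀ ℕ) where
  carrier := {e | e 0 = 0}
  add_mem' := by intro a b ha hb; simp_all
  zero_mem' := by simp

/-- Chains of the (reduced-coefficient) multisimplicial Loday complex of `ℚ[t]`. -/
abbrev Ch (n : ℕ) := AddMonoidAlgebra ℚ (ExpM n)

/-- The monomial with a single `t` at coordinate `v` (zero if `v` is the basepoint,
since `t` acts as `0` on the coefficients `ℚ`). -/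
noncomputable def tv {n : ℕ} (v : Coord n) : Ch n :=
  if h : v = 0 then 0
  else AddMonoidAlgebra.single ⟨Finsupp.single v 1, Finsupp.single_eq_of_ne (Ne.symm h)⟩ 1

/-- `elem v x = x_𝐯`: the multi-matrix with `x ∈ ℚ[t]` at coordinate `v`, `1` elsewhere. -/
noncomputable def elem {n : ℕ} (v : Coord n) (x : Polynomial ℚ) : Ch n :=
  Polynomial.aeval (tv v) x

/-- The `j`-th face map of the simplicial circle `S¹` from simplicial degree `2` to
degree `1`, on coordinates `{0,1,2} → {0,1}` (`0` the basepoint). -/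
def cface (j c : ℕ) : ℕ := (if 3 ≤ j + c then c - 1 else c) % 2

/-- The `j`-th face in direction `i` on coordinates. -/
def phi {n : ℕ} (i : Fin n) (j : ℕ) (c : Coord n) : Coord n :=
  Function.update c i (cface j (c i))

/-- Face of a monomial: push exponents forward along `phi i j` (adding exponents that
land at the same coordinate = multiplying the entries over each fiber); if a positive
exponent lands on the basepoint the result is `0` (reduced coefficients). -/
noncomputable def Dsingle {n : ℕ} (i : Fin n) (j : ℕ) (e : ExpM n) : Ch n :=
  if h : (Finsupp.mapDomain (phi i j) (e : Coord n →₀ ℕ)) 0 = 0 then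
    AddMonoidAlgebra.single ⟨Finsupp.mapDomain (phi i j) (e : Coord n →₀ ℕ), h⟩ 1
  else 0

/-- The `j`-th face map in direction `i`, extended linearly to chains. -/
noncomputable def D {n : ℕ} (i : Fin n) (j : ℕ) (a : Ch n) : Ch n :=
  Finsupp.sum a.coeff fun e q => q • Dsingle i j e

/-- The simplicial differential in direction `i` (from multidegree `𝟏ₙ + eᵢ`). -/
noncomputable def del {n : ℕ} (i : Fin n) (a : Ch n) : Ch n :=
  D i 0 a - D i 1 a + D i 2 a

/-- The monomial `e` lies in the box of multidegree `b`. -/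
def inBox {n : ℕ} (b : Coord n) (e : ExpM n) : Prop :=
  ∀ c ∈ (e : Coord n →₀ ℕ).support, ∀ i, c i ≤ b i

/-- Chains of multidegree (entrywise at most) `b`. -/
noncomputable def Deg {n : ℕ} (b : Coord n) : Submodule ℚ (Ch n) :=
  Submodule.span ℚ {x | ∃ e : ExpM n, inBox b e ∧ x = AddMonoidAlgebra.single e 1}

/-- Boundaries in multidegree `𝟏ₙ`: images of the total differential on chains of the
multidegrees `𝟏ₙ + eᵢ` (in directions of multidegree `1` the cyclic differentials
vanish, so the total differential is `± del i` there). -/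
noncomputable def bdry (n : ℕ) : Submodule ℚ (Ch n) :=
  Submodule.span ℚ {x | ∃ (i : Fin n) (z : Ch n),
    z ∈ Deg (Function.update (fun _ => 1) i 2) ∧ x = del i z}

/-- Two chains of multidegree `𝟏ₙ` are homologous if their difference is a boundary. -/
def Homologous {n : ℕ} (x y : Ch n) : Prop := x - y ∈ bdry n

/-!
Each face map `D i j` is the algebra endomorphism of `Ch n` induced by the coordinate map
`phi i j`, so it sends `x_𝐯` to `x_{phi i j 𝐯}` and is multiplicative. Hence
`del` of `x_{(𝐚,1)} · y_{(𝐛,2)}` is computed factorwise from the three faces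
`2 ↦ 0, 1, 1` and `1 ↦ 1, 1, 0` of the simplicial circle, giving
`x_{(𝐚,0)} y_{(𝐛,1)} - x_{(𝐚,1)} y_{(𝐛,1)} + x_{(𝐚,1)} y_{(𝐛,0)}`; the chain
`x_{(𝐚,1)} · y_{(𝐛,2)}` has multidegree `(𝟏, 2)`, so this difference is a boundary.
-/

section Faces

variable {n : ℕ}

lemma Dsingle_zero (i : Fin n) (j : ℕ) : Dsingle i j 0 = 1 := by
  have h0 : ((0 : ExpM n) : Coord n →₀ ℕ) = 0 := rfl
  simp only [Dsingle, h0, Finsupp.mapDomain_zero, Finsupp.coe_zero, Pi.zero_apply, dite_true]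
  rfl

/-- Pushing exponents forward is additive, and a product lands a `t` on the basepoint
exactly when one of its factors does. -/
lemma Dsingle_add (i : Fin n) (j : ℕ) (e f : ExpM n) :
    Dsingle i j (e + f) = Dsingle i j e * Dsingle i j f := by
  have hco : ((e + f : ExpM n) : Coord n →₀ ℕ) = (e : Coord n →₀ ℕ) + f := rfl
  unfold Dsingle
  rw [hco, Finsupp.mapDomain_add]
  by_cases he : (Finsupp.mapDomain (phi i j) (e : Coord n →₀ ℕ)) 0 = 0 <;>
    by_cases hf : (Finsupp.mapDomain (phi i j) (f : Coord n →₀ ℕ)) 0 = 0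
  · rw [dif_pos he, dif_pos hf, dif_pos (by simp [he, hf]),
      AddMonoidAlgebra.single_mul_single, one_mul]
    rfl
  · rw [dif_pos he, dif_neg hf, dif_neg (by simp [he, hf]), mul_zero]
  · rw [dif_neg he, dif_pos hf, dif_neg (by simp [he, hf]), zero_mul]
  · rw [dif_neg he, dif_neg hf, dif_neg (by simp [he, hf]), zero_mul]

noncomputable def faceMonoidHom (i : Fin n) (j : ℕ) : Multiplicative (ExpM n) →* Ch n where
  toFun e := Dsingle i j e.toAdd
  map_one' := Dsingle_zero i j
  map_mul' e f := Dsingle_add i j e.toAdd f.toAdd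

noncomputable def faceAlgHom (i : Fin n) (j : ℕ) : Ch n →ₐ[ℚ] Ch n :=
  AddMonoidAlgebra.lift ℚ (Ch n) (ExpM n) (faceMonoidHom i j)

lemma D_eq_faceAlgHom (i : Fin n) (j : ℕ) (p : Ch n) : D i j p = faceAlgHom i j p := by
  rw [faceAlgHom, AddMonoidAlgebra.lift_apply]
  rfl

lemma D_mul (i : Fin n) (j : ℕ) (p q : Ch n) : D i j (p * q) = D i j p * D i j q := by
  simp only [D_eq_faceAlgHom, map_mul]

lemma cface_zero (j : ℕ) : cface j 0 = 0 := by
  unfold cface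
  split_ifs <;> rfl

lemma phi_zero (i : Fin n) (j : ℕ) : phi i j 0 = 0 := by
  rw [phi, Pi.zero_apply, cface_zero]
  exact Function.update_eq_self i 0

lemma D_tv (i : Fin n) (j : ℕ) (v : Coord n) : D i j (tv v) = tv (phi i j v) := by
  by_cases hv : v = 0
  · subst hv
    simp [tv, D, phi_zero]
  · rw [tv, dif_neg hv, D, AddMonoidAlgebra.coeff_single, Finsupp.sum_single_index (by simp),
      one_smul, Dsingle]
    have hmap : Finsupp.mapDomain (phi i j)
        ((⟨Finsupp.single v 1, Finsupp.single_eq_of_ne (Ne.symm hv)⟩ : ExpM n) : Coord n →₀ ℕ)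
        = Finsupp.single (phi i j v) 1 := Finsupp.mapDomain_single
    by_cases hp : phi i j v = 0
    · rw [dif_neg (by rw [hmap, hp]; simp), tv, dif_pos hp]
    · rw [dif_pos (by rw [hmap]; exact Finsupp.single_eq_of_ne (Ne.symm hp)), tv, dif_neg hp]
      exact congrArg (AddMonoidAlgebra.single · 1) (Subtype.ext hmap)

lemma D_elem (i : Fin n) (j : ℕ) (v : Coord n) (x : Polynomial ℚ) :
    D i j (elem v x) = elem (phi i j v) x := by
  rw [elem, elem, D_eq_faceAlgHom, ← Polynomial.aeval_algHom_apply, ← D_eq_faceAlgHom, D_tv]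

lemma phi_last_snoc (c : Fin n → ℕ) (j k : ℕ) :
    phi (Fin.last n) j (Fin.snoc c k) = Fin.snoc c (cface j k) := by
  rw [phi, Fin.snoc_last, Fin.update_snoc_last]

lemma del_last_elem_mul_elem (c d : Fin n → ℕ) (x y : Polynomial ℚ) :
    del (Fin.last n) (elem (Fin.snoc c 1) x * elem (Fin.snoc d 2) y) =
      elem (Fin.snoc c 0) x * elem (Fin.snoc d 1) y
        - elem (Fin.snoc c 1) x * elem (Fin.snoc d 1) y
        + elem (Fin.snoc c 1) x * elem (Fin.snoc d 0) y := by
  simp only [del, D_mul, D_elem, phi_last_snoc]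
  have faces : cface 0 1 = 1 ∧ cface 1 1 = 1 ∧ cface 2 1 = 0 ∧
      cface 0 2 = 0 ∧ cface 1 2 = 1 ∧ cface 2 2 = 1 := by decide
  obtain ⟨h01, h11, h21, h02, h12, h22⟩ := faces
  rw [h01, h11, h21, h02, h12, h22]
  abel

end Faces

section Degree

variable {n : ℕ}

lemma one_mem_Deg (b : Coord n) : (1 : Ch n) ∈ Deg b :=
  Submodule.subset_span ⟨0, fun c hc => by simp at hc, rfl⟩

lemma mul_mem_Deg {b : Coord n} {p q : Ch n} (hp : p ∈ Deg b) (hq : q ∈ Deg b) :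
    p * q ∈ Deg b := by
  rw [Deg] at hp hq ⊢
  have h := Submodule.mul_mem_mul hp hq
  rw [Submodule.span_mul_span] at h
  refine Submodule.span_le.2 ?_ h
  rintro _ ⟨_, ⟨e, he, rfl⟩, _, ⟨f, hf, rfl⟩, rfl⟩
  refine Submodule.subset_span
    ⟨e + f, fun c hc => ?_, by simp [AddMonoidAlgebra.single_mul_single]⟩
  have hco : ((e + f : ExpM n) : Coord n →₀ ℕ) = (e : Coord n →₀ ℕ) + f := rfl
  rw [hco] at hc
  rcases Finset.mem_union.1 (Finsupp.support_add hc) with hce | hcf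
  · exact he c hce
  · exact hf c hcf

noncomputable def Deg.toSubalgebra (b : Coord n) : Subalgebra ℚ (Ch n) :=
  (Deg b).toSubalgebra (one_mem_Deg b) fun _ _ => mul_mem_Deg

lemma tv_mem_Deg {b v : Coord n} (hv : v ≤ b) : tv v ∈ Deg b := by
  by_cases h : v = 0
  · rw [tv, dif_pos h]
    exact Submodule.zero_mem _
  · rw [tv, dif_neg h]
    refine Submodule.subset_span ⟨_, fun c hc => ?_, rfl⟩
    rw [Finset.mem_singleton.1 (Finsupp.support_single_subset hc)]
    exact hv

lemma elem_mem_Deg {b v : Coord n} (hv : v ≤ b) (x : Polynomial ℚ) : elem v x ∈ Deg b :=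
  Algebra.adjoin_le (S := Deg.toSubalgebra b) (Set.singleton_subset_iff.2 (tv_mem_Deg hv))
    (Polynomial.aeval_mem_adjoin_singleton ℚ (tv v))

lemma snoc_le_update_last {c : Fin n → ℕ} {k : ℕ} (hc : c ≤ 1) (hk : k ≤ 2) :
    Fin.snoc c k ≤ Function.update (fun _ => 1) (Fin.last n) 2 := by
  intro m
  refine Fin.lastCases ?_ (fun i => ?_) m
  · rw [Fin.snoc_last, Function.update_self]
    exact hk
  · rw [Fin.snoc_castSucc, Function.update_of_ne (Fin.castSucc_lt_last i).ne]
    exact hc i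

end Degree

lemma homologous_of_sub_eq_del {n : ℕ} {u v z : Ch n} (i : Fin n)
    (hz : z ∈ Deg (Function.update (fun _ => 1) i 2)) (h : v - u = del i z) :
    Homologous u v := by
  rw [Homologous, ← neg_sub, h]
  exact Submodule.neg_mem _ (Submodule.subset_span ⟨i, z, hz, rfl⟩)

theorem split_moving_lemma (n : ℕ) (a b : Fin n → Fin 2) (x y : Polynomial ℚ) :
    Homologous
      (elem (Fin.snoc (fun i => (a i : ℕ)) 1) x * elem (Fin.snoc (fun i => (b i : ℕ)) 1) y)
      (elem (Fin.snoc (fun i => (a i : ℕ)) 0) x * elem (Fin.snoc (fun i => (b i : ℕ)) 1) y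
        + elem (Fin.snoc (fun i => (a i : ℕ)) 1) x * elem (Fin.snoc (fun i => (b i : ℕ)) 0) y)
    ∧
    elem (Fin.snoc (fun i => (a i : ℕ)) 0) x * elem (Fin.snoc (fun i => (b i : ℕ)) 1) y
      - elem (Fin.snoc (fun i => (a i : ℕ)) 1) x * elem (Fin.snoc (fun i => (b i : ℕ)) 1) y
      + elem (Fin.snoc (fun i => (a i : ℕ)) 1) x * elem (Fin.snoc (fun i => (b i : ℕ)) 0) y
      = del (Fin.last n)
          (elem (Fin.snoc (fun i => (a i : ℕ)) 1) x *
            elem (Fin.snoc (fun i => (b i : ℕ)) 2) y) := by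
  have hsplit := del_last_elem_mul_elem (fun i => (a i : ℕ)) (fun i => (b i : ℕ)) x y
  have ha : (fun i => (a i : ℕ)) ≤ 1 := fun i => Nat.le_of_lt_succ (a i).isLt
  have hb : (fun i => (b i : ℕ)) ≤ 1 := fun i => Nat.le_of_lt_succ (b i).isLt
  have hz := mul_mem_Deg (elem_mem_Deg (snoc_le_update_last ha one_le_two) x)
    (elem_mem_Deg (snoc_le_update_last hb le_rfl) y)
  refine ⟨homologous_of_sub_eq_del (Fin.last n) hz ?_, hsplit.symm⟩
  rw [hsplit]
  abel
end
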